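/- Let G be a graph, S ⊆ V, β ≥ 1, and ℓ = ℓ_β = σ_{V,β} the natural β-partition. If the dependency graph of a node v satisfies D(ℓ, v) ⊆ S, then σ_{S,β}(w) = ℓ(w) for every w ∈ D(ℓ, v). -/

import Mathlib

open Classical

variable {V : Type*}

/-- `G` has arboricity at most `a`: every subgraph `H` with at least `2` vertices
satisfies `⌈|E(H)|/(|V(H)|-1)⌉ ≤ a`, i.e. `|E(H)| ≤ a * (|V(H)| - 1)`. -/
def HasArboricity (G : SimpleGraph V) (a : ℕ) : Prop :=
  ∀ H : G.Subgraph, 2 ≤ H.verts.ncard → H.edgeSet.ncard ≤ a * (H.verts.ncard - 1)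

/-- Vertices assigned a layer `≤ i` in the iterative construction of the
`S`-induced `β`-partition. -/
noncomputable def assignedUpTo (G : SimpleGraph V) (S : Set V) (β : ℕ) : ℕ → Set V
  | 0 => {v | v ∈ S ∧ (G.neighborSet v).ncard ≤ β}
  | (i+1) => assignedUpTo G S β i ∪
      {v | v ∈ S ∧ ((G.neighborSet v) \ assignedUpTo G S β i).ncard ≤ β}

/-- The `S`-induced `β`-partition `σ_{S,β} : V → ℕ∞`. -/
noncomputable def indSigma (G : SimpleGraph V) (S : Set V) (β : ℕ) (v : V) : ℕ∞ :=
  if _h : ∃ i, v ∈ assignedUpTo G S β i then (sInf {i | v ∈ assignedUpTo G S β i} : ℕ) else ⊤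

/-- Auxiliary definition of the dependency graph, by fuel on the layer. -/
noncomputable def depAux (G : SimpleGraph V) (σ : V → ℕ∞) : ℕ → V → Set V
  | 0, v => if σ v = 0 then {v} else ∅
  | (n+1), v => if σ v = ((n+1 : ℕ) : ℕ∞)
      then insert v (⋃ w ∈ {w | G.Adj v w ∧ σ w < σ v}, depAux G σ n w)
      else depAux G σ n v

/-- The dependency graph `D(σ, v)`. -/
noncomputable def depGraph (G : SimpleGraph V) (σ : V → ℕ∞) (v : V) : Set V :=
  depAux G σ (σ v).toNat v

/-- A partial `β`-partition: every node with finite layer has at most `β`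
neighbors in equal or higher layers. -/
def IsPartialBetaPartition (G : SimpleGraph V) (β : ℕ) (lam : V → ℕ∞) : Prop :=
  ∀ v, lam v ≠ ⊤ → {w | G.Adj v w ∧ lam v ≤ lam w}.ncard ≤ β

/-!
Layer by layer, the construction restricted to `S` keeps pace with the one on `V` on any
`D ⊆ S` that contains, with each node, all its neighbours of lower natural layer: a node of
`D` entering the natural partition at step `i + 1` has, by induction, all its neighbours of
natural layer `≤ i` already assigned in the `S`-construction too, so at most `β` of its
neighbours are still unassigned there. Conversely, shrinking `S` can only delay assignments.
The dependency graph `D(ℓ, v)` is such a set `D`.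
-/

theorem ENat.lt_natCast_succ_iff {m : ℕ∞} {n : ℕ} : m < ((n + 1 : ℕ) : ℕ∞) ↔ m ≤ n := by
  rw [Nat.cast_succ, ENat.lt_add_one_iff (ENat.natCast_ne_top n)]

section Partition

variable (G : SimpleGraph V) (β : ℕ)

theorem assignedUpTo_mono (S : Set V) : Monotone (assignedUpTo G S β) :=
  monotone_nat_of_le_succ fun _ => Set.subset_union_left

theorem mem_assignedUpTo_iff {S : Set V} {w : V} {i : ℕ} :
    w ∈ assignedUpTo G S β i ↔ indSigma G S β w ≤ i := by
  unfold indSigma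
  split_ifs with h
  · rw [Nat.cast_le]
    exact ⟨fun hw => Nat.sInf_le hw, fun hle => assignedUpTo_mono G β S hle (Nat.sInf_mem h)⟩
  · simp only [top_le_iff, ENat.natCast_ne_top, iff_false]
    exact fun hw => h ⟨i, hw⟩

/-- Since `Set.ncard` of an infinite set is `0`, nodes of infinite degree land in layer `0`. -/
theorem mem_assignedUpTo_zero_of_infinite {S : Set V} {u : V} (hu : u ∈ S)
    (hinf : (G.neighborSet u).Infinite) : u ∈ assignedUpTo G S β 0 :=
  ⟨hu, by simp [hinf.ncard]⟩

theorem indSigma_le_of_forall_mem_assignedUpTo {S T : Set V} {w : V}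
    (h : ∀ i, w ∈ assignedUpTo G T β i → w ∈ assignedUpTo G S β i) :
    indSigma G S β w ≤ indSigma G T β w := by
  cases hw : indSigma G T β w with
  | top => exact le_top
  | coe i => exact (mem_assignedUpTo_iff G β).1 (h i ((mem_assignedUpTo_iff G β).2 hw.le))

theorem assignedUpTo_subset_assignedUpTo {S T : Set V} (hST : S ⊆ T) :
    ∀ i, assignedUpTo G S β i ⊆ assignedUpTo G T β i
  | 0 => fun _ hu => ⟨hST hu.1, hu.2⟩
  | i + 1 => by
    rintro u (hu | ⟨huS, hcard⟩)
    · exact Or.inl (assignedUpTo_subset_assignedUpTo hST i hu)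
    · by_cases hinf : (G.neighborSet u).Infinite
      · exact assignedUpTo_mono G β T (Nat.zero_le _)
          (mem_assignedUpTo_zero_of_infinite G β (hST huS) hinf)
      · refine Or.inr ⟨hST huS, le_trans (Set.ncard_le_ncard ?_ ?_) hcard⟩
        · exact Set.sdiff_subset_sdiff_right (assignedUpTo_subset_assignedUpTo hST i)
        · exact (Set.not_infinite.1 hinf).sdiff

theorem indSigma_antitone {S T : Set V} (hST : S ⊆ T) (w : V) :
    indSigma G T β w ≤ indSigma G S β w :=
  indSigma_le_of_forall_mem_assignedUpTo G β fun i hw =>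
    assignedUpTo_subset_assignedUpTo G β hST i hw

theorem inter_assignedUpTo_subset_of_lowerClosed {S T D : Set V} (hDS : D ⊆ S)
    (hD : ∀ w ∈ D, ∀ u, G.Adj w u → indSigma G T β u < indSigma G T β w → u ∈ D) :
    ∀ i, D ∩ assignedUpTo G T β i ⊆ assignedUpTo G S β i
  | 0 => fun _ ⟨hwD, hw⟩ => ⟨hDS hwD, hw.2⟩
  | i + 1 => by
    rintro w ⟨hwD, hw⟩
    have ih := inter_assignedUpTo_subset_of_lowerClosed hDS hD i
    by_cases hwi : w ∈ assignedUpTo G T β i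
    · exact Or.inl (ih ⟨hwD, hwi⟩)
    by_cases hinf : (G.neighborSet w).Infinite
    · exact assignedUpTo_mono G β S (Nat.zero_le _)
        (mem_assignedUpTo_zero_of_infinite G β (hDS hwD) hinf)
    have hcard : (G.neighborSet w \ assignedUpTo G T β i).ncard ≤ β := by
      rcases hw with hw | hw
      · exact absurd hw hwi
      · exact hw.2
    -- a neighbour assigned by step `i` lies in a strictly lower natural layer than `w`
    have hlower : G.neighborSet w \ assignedUpTo G S β i ⊆
        G.neighborSet w \ assignedUpTo G T β i := by
      refine fun u ⟨hadj, huS⟩ => ⟨hadj, fun huT => huS (ih ⟨hD w hwD u hadj ?_, huT⟩)⟩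
      rw [mem_assignedUpTo_iff] at hwi huT
      exact huT.trans_lt (not_le.1 hwi)
    exact Or.inr ⟨hDS hwD,
      (Set.ncard_le_ncard hlower (Set.not_infinite.1 hinf).sdiff).trans hcard⟩

theorem indSigma_eq_of_lowerClosed {S T D : Set V} (hST : S ⊆ T) (hDS : D ⊆ S)
    (hD : ∀ w ∈ D, ∀ u, G.Adj w u → indSigma G T β u < indSigma G T β w → u ∈ D)
    {w : V} (hw : w ∈ D) : indSigma G S β w = indSigma G T β w :=
  le_antisymm
    (indSigma_le_of_forall_mem_assignedUpTo G β fun i hwi =>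
      inter_assignedUpTo_subset_of_lowerClosed G β hDS hD i ⟨hw, hwi⟩)
    (indSigma_antitone G β hST w)

end Partition

section DependencyGraph

variable (G : SimpleGraph V) (σ : V → ℕ∞)

theorem self_mem_depAux : ∀ {n : ℕ} {v : V}, σ v ≤ n → v ∈ depAux G σ n v
  | 0, v, hv => by simp [depAux, nonpos_iff_eq_zero.1 (by exact_mod_cast hv : σ v ≤ 0)]
  | n + 1, v, hv => by
    by_cases hc : σ v = ((n + 1 : ℕ) : ℕ∞)
    · simp [depAux, hc]
    · simp only [depAux, if_neg hc]
      exact self_mem_depAux (ENat.lt_natCast_succ_iff.1 (lt_of_le_of_ne hv hc))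

theorem mem_depAux_of_adj_of_lt :
    ∀ {n : ℕ} {v w u : V}, w ∈ depAux G σ n v → G.Adj w u → σ u < σ w → u ∈ depAux G σ n v
  | 0, v, w, u, hw, _, hu => by
    by_cases h0 : σ v = 0
    · simp only [depAux, if_pos h0, Set.mem_singleton_iff] at hw
      subst hw
      simp [h0] at hu
    · simp [depAux, if_neg h0] at hw
  | n + 1, v, w, u, hw, hadj, hu => by
    by_cases hc : σ v = ((n + 1 : ℕ) : ℕ∞)
    · simp only [depAux, if_pos hc, Set.mem_insert_iff, Set.mem_iUnion₂] at hw ⊢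
      right
      rcases hw with rfl | ⟨w', hw', hw⟩
      · exact ⟨u, ⟨hadj, hu⟩, self_mem_depAux G σ (ENat.lt_natCast_succ_iff.1 (hc ▸ hu))⟩
      · exact ⟨w', hw', mem_depAux_of_adj_of_lt hw hadj hu⟩
    · simp only [depAux, if_neg hc] at hw ⊢
      exact mem_depAux_of_adj_of_lt hw hadj hu

theorem mem_depGraph_of_adj_of_lt {v w u : V} (hw : w ∈ depGraph G σ v) (hadj : G.Adj w u)
    (hu : σ u < σ w) : u ∈ depGraph G σ v :=
  mem_depAux_of_adj_of_lt G σ hw hadj hu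

end DependencyGraph

theorem indSigma_eq_natural_on_depGraph_general (G : SimpleGraph V) (S : Set V) (β : ℕ)
    (v : V)
    (h : depGraph G (indSigma G Set.univ β) v ⊆ S) :
    ∀ w ∈ depGraph G (indSigma G Set.univ β) v,
      indSigma G S β w = indSigma G Set.univ β w :=
  fun _ hw => indSigma_eq_of_lowerClosed G β (Set.subset_univ S) h
    (fun _ hw' _ hadj hu => mem_depGraph_of_adj_of_lt G _ hw' hadj hu) hw

/-- If the dependency graph of `v` (w.r.t. the natural `β`-partition
`ℓ = σ_{V,β}`) satisfies `D(ℓ, v) ⊆ S`, then `σ_{S,β}(w) = ℓ(w)` for every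
`w ∈ D(ℓ, v)`. -/
theorem indSigma_eq_natural_on_depGraph (G : SimpleGraph V) (S : Set V) (β : ℕ)
    (hβ : 1 ≤ β) (v : V)
    (h : depGraph G (indSigma G Set.univ β) v ⊆ S) :
    ∀ w ∈ depGraph G (indSigma G Set.univ β) v,
      indSigma G S β w = indSigma G Set.univ β w :=
  indSigma_eq_natural_on_depGraph_general G S β v h
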